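/- arXiv:1906.02313 — 5 statements merged into one kernel-verified Lean document; each statement's English description precedes it below -/
import Mathlib

section
/- If U is a regular subsemigroup of a semigroup S, then Green's relation L on U equals the restriction to U of Green's relation L on S, and Green's relation H on U equals the restriction to U of Green's relation H on S. -/
/-- `x ≤_R y` in a semigroup: `x ∈ yS¹`. -/
def leR {S : Type*} [Semigroup S] (x y : S) : Prop := x = y ∨ ∃ t, x = y * t

/-- `x ≤_L y` in a semigroup: `x ∈ S¹y`. -/
def leL {S : Type*} [Semigroup S] (x y : S) : Prop := x = y ∨ ∃ t, x = t * y

/-- `x ≤_J y` in a semigroup: `x ∈ S¹yS¹`. -/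
def leJ {S : Type*} [Semigroup S] (x y : S) : Prop :=
  x = y ∨ (∃ t, x = y * t) ∨ (∃ t, x = t * y) ∨ ∃ t u, x = t * y * u

/-- Green's relation `R`: `xS¹ = yS¹`. -/
def GreenR {S : Type*} [Semigroup S] (x y : S) : Prop := leR x y ∧ leR y x

/-- Green's relation `L`: `S¹x = S¹y`. -/
def GreenL {S : Type*} [Semigroup S] (x y : S) : Prop := leL x y ∧ leL y x

/-- Green's relation `J`: `S¹xS¹ = S¹yS¹`. -/
def GreenJ {S : Type*} [Semigroup S] (x y : S) : Prop := leJ x y ∧ leJ y x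

/-- Green's relation `H = R ∩ L`. -/
def GreenH {S : Type*} [Semigroup S] (x y : S) : Prop := GreenR x y ∧ GreenL x y

/-- Green's relation `D = R ∘ L`. -/
def GreenD {S : Type*} [Semigroup S] (x y : S) : Prop := ∃ z, GreenR x z ∧ GreenL z y

/-!
If `y = y * w * y` with `w ∈ U`, then every `x ∈ S¹y` satisfies `x = (x * w) * y`, and `x * w ∈ U`
whenever `x ∈ U`; dually every `x ∈ yS¹` satisfies `x = y * (w * x)`. So for a regular `U` the
preorders `≤_L` and `≤_R` of `U` are those of `S` restricted to `U`, and hence so are `L`, `R`, `H`.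
-/

def IsVonNeumannRegular {S : Type*} [Semigroup S] (y : S) : Prop := ∃ z, y = y * z * y

section

variable {S T : Type*} [Semigroup S] [Semigroup T] {x y w : S}

theorem leL.map (f : S →ₙ* T) (h : leL x y) : leL (f x) (f y) := by
  rcases h with rfl | ⟨t, rfl⟩
  · exact Or.inl rfl
  · exact Or.inr ⟨f t, map_mul f t y⟩

theorem leR.map (f : S →ₙ* T) (h : leR x y) : leR (f x) (f y) := by
  rcases h with rfl | ⟨t, rfl⟩
  · exact Or.inl rfl
  · exact Or.inr ⟨f t, map_mul f y t⟩

theorem leL.eq_mul_mul (h : leL x y) (hy : y = y * w * y) : x = x * w * y := by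
  rcases h with rfl | ⟨t, rfl⟩
  · exact hy
  · calc t * y = t * (y * w * y) := by rw [← hy]
      _ = t * y * w * y := by simp only [mul_assoc]

theorem leR.eq_mul_mul (h : leR x y) (hy : y = y * w * y) : x = y * (w * x) := by
  rcases h with rfl | ⟨t, rfl⟩
  · rw [← mul_assoc]; exact hy
  · calc y * t = y * w * y * t := by rw [← hy]
      _ = y * (w * (y * t)) := by simp only [mul_assoc]

end

section

variable {S : Type*} [Semigroup S] {U : Subsemigroup S} {x y : U}

theorem leL_coe_iff (hy : IsVonNeumannRegular y) : leL (x : S) y ↔ leL x y := by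
  refine ⟨fun h => ?_, leL.map (MulMemClass.subtype U)⟩
  obtain ⟨w, hw⟩ := hy
  exact Or.inr ⟨x * w, Subtype.ext (h.eq_mul_mul (congrArg Subtype.val hw))⟩

theorem leR_coe_iff (hy : IsVonNeumannRegular y) : leR (x : S) y ↔ leR x y := by
  refine ⟨fun h => ?_, leR.map (MulMemClass.subtype U)⟩
  obtain ⟨w, hw⟩ := hy
  exact Or.inr ⟨w * x, Subtype.ext (h.eq_mul_mul (congrArg Subtype.val hw))⟩

theorem greenL_coe_iff (hx : IsVonNeumannRegular x) (hy : IsVonNeumannRegular y) :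
    GreenL (x : S) y ↔ GreenL x y :=
  and_congr (leL_coe_iff hy) (leL_coe_iff hx)

theorem greenR_coe_iff (hx : IsVonNeumannRegular x) (hy : IsVonNeumannRegular y) :
    GreenR (x : S) y ↔ GreenR x y :=
  and_congr (leR_coe_iff hy) (leR_coe_iff hx)

theorem greenH_coe_iff (hx : IsVonNeumannRegular x) (hy : IsVonNeumannRegular y) :
    GreenH (x : S) y ↔ GreenH x y :=
  and_congr (greenR_coe_iff hx hy) (greenL_coe_iff hx hy)

end

/-- If `U` is a regular subsemigroup of `S`, then Green's `L` (resp. `H`) on `U`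
is the restriction to `U` of Green's `L` (resp. `H`) on `S`. -/
theorem stmt_2 {S : Type*} [Semigroup S] (U : Subsemigroup S)
    (hreg : ∀ y : U, ∃ z : U, y = y * z * y) :
    (∀ x y : U, GreenL x y ↔ GreenL (x : S) (y : S)) ∧
    (∀ x y : U, GreenH x y ↔ GreenH (x : S) (y : S)) :=
  ⟨fun x y => (greenL_coe_iff (hreg x) (hreg y)).symm,
    fun x y => (greenH_coe_iff (hreg x) (hreg y)).symm⟩
end

section
/- Every group-bound semigroup is stable. -/
/-- `spow x k = x ^ (k + 1)` in a semigroup. -/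
def spow {S : Type*} [Semigroup S] (x : S) : ℕ → S
  | 0 => x
  | n + 1 => spow x n * x

/-!
Work in the monoid `S¹ = WithOne S`. If `x = a x b`, then `x = aⁿ x bⁿ` for every `n`.
If `x J xy`, then `x = t x b` with `b = y u`; choosing `n ≥ 1` with `bⁿ R b²ⁿ`, say
`bⁿ = b²ⁿ c`, gives `x = tⁿ x bⁿ bⁿ c = x bⁿ c ∈ x y S¹`, so `x R xy`.
Left stability is the mirror image.
-/

section Monoid

variable {M : Type*} [Monoid M] {a b x : M}

theorem eq_pow_mul_mul_pow_of_eq_mul_mul (h : x = a * x * b) (n : ℕ) :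
    x = a ^ n * x * b ^ n := by
  induction n with
  | zero => simp
  | succ n ih =>
    calc x = a ^ n * (a * x * b) * b ^ n := by rw [← h]; exact ih
    _ = a ^ (n + 1) * x * b ^ (n + 1) := by rw [pow_succ, pow_succ']; simp only [mul_assoc]

theorem eq_mul_mul_pow_mul_of_eq_mul_mul (h : x = a * x * b) {n : ℕ} {c : M}
    (hb : b ^ (n + 1) = b ^ (n + 1) * b ^ (n + 1) * c) : x = x * b * (b ^ n * c) := by
  have hx := eq_pow_mul_mul_pow_of_eq_mul_mul h (n + 1)
  calc x = a ^ (n + 1) * x * (b ^ (n + 1) * b ^ (n + 1) * c) := by rw [← hb]; exact hx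
  _ = (a ^ (n + 1) * x * b ^ (n + 1)) * b ^ (n + 1) * c := by simp only [mul_assoc]
  _ = x * b * (b ^ n * c) := by rw [← hx, pow_succ']; simp only [mul_assoc]

theorem eq_mul_pow_mul_mul_of_eq_mul_mul (h : x = a * x * b) {n : ℕ} {c : M}
    (ha : a ^ (n + 1) = c * (a ^ (n + 1) * a ^ (n + 1))) : x = c * a ^ n * (a * x) := by
  have hx := eq_pow_mul_mul_pow_of_eq_mul_mul h (n + 1)
  calc x = c * (a ^ (n + 1) * a ^ (n + 1)) * x * b ^ (n + 1) := by rw [← ha]; exact hx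
  _ = c * a ^ (n + 1) * (a ^ (n + 1) * x * b ^ (n + 1)) := by simp only [mul_assoc]
  _ = c * a ^ n * (a * x) := by rw [← hx, pow_succ]; simp only [mul_assoc]

end Monoid

section Semigroup

variable {S : Type*} [Semigroup S]

theorem leR_iff {x y : S} : leR x y ↔ ∃ t : WithOne S, (x : WithOne S) = y * t := by
  simp only [leR, WithOne.exists, mul_one, ← WithOne.coe_mul, WithOne.coe_inj]

theorem leL_iff {x y : S} : leL x y ↔ ∃ t : WithOne S, (x : WithOne S) = t * y := by
  simp only [leL, WithOne.exists, one_mul, ← WithOne.coe_mul, WithOne.coe_inj]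

theorem leJ_iff {x y : S} : leJ x y ↔ ∃ t u : WithOne S, (x : WithOne S) = t * y * u := by
  simp only [leJ, WithOne.exists, one_mul, mul_one, ← WithOne.coe_mul, WithOne.coe_inj,
    exists_or, or_assoc]
  exact or_congr_right or_left_comm

theorem WithOne.coe_spow (x : S) (n : ℕ) :
    ((spow x n : S) : WithOne S) = (x : WithOne S) ^ (n + 1) := by
  induction n with
  | zero => simp [spow]
  | succ n ih => rw [spow, WithOne.coe_mul, ih, ← pow_succ]

theorem WithOne.exists_coe_eq_coe_mul (y : S) (u : WithOne S) :
    ∃ b : S, (b : WithOne S) = y * u := by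
  cases u with
  | one => exact ⟨y, (mul_one _).symm⟩
  | coe u => exact ⟨y * u, WithOne.coe_mul _ _⟩

theorem WithOne.exists_coe_eq_mul_coe (t : WithOne S) (y : S) :
    ∃ a : S, (a : WithOne S) = t * y := by
  cases t with
  | one => exact ⟨y, (one_mul _).symm⟩
  | coe t => exact ⟨t * y, WithOne.coe_mul _ _⟩

theorem GreenH.exists_pow_eq_pow_mul_pow_mul {b : S} {k : ℕ}
    (h : GreenH (spow b k) (spow b (2 * k + 1))) :
    (∃ c : WithOne S, (b : WithOne S) ^ (k + 1) = b ^ (k + 1) * b ^ (k + 1) * c) ∧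
      ∃ c : WithOne S, (b : WithOne S) ^ (k + 1) = c * (b ^ (k + 1) * b ^ (k + 1)) := by
  have hsq : ((spow b (2 * k + 1) : S) : WithOne S) = b ^ (k + 1) * b ^ (k + 1) := by
    rw [WithOne.coe_spow, ← pow_add]
    congr 1
    ring
  rw [← hsq, ← WithOne.coe_spow]
  exact ⟨leR_iff.1 h.1.1, leL_iff.1 h.2.1⟩

theorem greenR_mul_of_greenJ_mul
    (hgb : ∀ x : S, ∃ k : ℕ, GreenH (spow x k) (spow x (2 * k + 1))) {x y : S}
    (h : GreenJ x (x * y)) : GreenR x (x * y) := by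
  refine ⟨?_, Or.inr ⟨y, rfl⟩⟩
  obtain ⟨t, u, hx⟩ := leJ_iff.1 h.1
  obtain ⟨b, hb⟩ := WithOne.exists_coe_eq_coe_mul y u
  have hx' : (x : WithOne S) = t * x * b :=
    hx.trans (by rw [hb, WithOne.coe_mul]; simp only [mul_assoc])
  obtain ⟨k, hk⟩ := hgb b
  obtain ⟨c, hc⟩ := hk.exists_pow_eq_pow_mul_pow_mul.1
  refine leR_iff.2 ⟨u * (b ^ k * c), ?_⟩
  exact (eq_mul_mul_pow_mul_of_eq_mul_mul hx' hc).trans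
    (by rw [hb, WithOne.coe_mul]; simp only [mul_assoc])

theorem greenL_mul_of_greenJ_mul
    (hgb : ∀ x : S, ∃ k : ℕ, GreenH (spow x k) (spow x (2 * k + 1))) {x y : S}
    (h : GreenJ x (y * x)) : GreenL x (y * x) := by
  refine ⟨?_, Or.inr ⟨y, rfl⟩⟩
  obtain ⟨t, u, hx⟩ := leJ_iff.1 h.1
  obtain ⟨a, ha⟩ := WithOne.exists_coe_eq_mul_coe t y
  have hx' : (x : WithOne S) = a * x * u :=
    hx.trans (by rw [ha, WithOne.coe_mul]; simp only [mul_assoc])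
  obtain ⟨k, hk⟩ := hgb a
  obtain ⟨c, hc⟩ := hk.exists_pow_eq_pow_mul_pow_mul.2
  refine leL_iff.2 ⟨c * a ^ k * t, ?_⟩
  exact (eq_mul_pow_mul_mul_of_eq_mul_mul hx' hc).trans
    (by rw [ha, WithOne.coe_mul]; simp only [mul_assoc])

end Semigroup

/-- Every group-bound semigroup is stable: if for every `x` some `x^k` is
`H`-related to `x^(2k)`, then `x J xy → x R xy` and `x J yx → x L yx`. -/
theorem stmt_4 {S : Type*} [Semigroup S]
    (hgb : ∀ x : S, ∃ k : ℕ, GreenH (spow x k) (spow x (2 * k + 1))) :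
    ∀ x y : S, (GreenJ x (x * y) → GreenR x (x * y)) ∧
      (GreenJ x (y * x) → GreenL x (y * x)) :=
  fun _ _ => ⟨greenR_mul_of_greenJ_mul hgb, greenL_mul_of_greenJ_mul hgb⟩
end

section
/- In any semigroup, if a J-class contains a stable element y, then every element J-related to y is D-related to y; that is, the J-class of y is a D-class. -/
/-!
If `x J y`, write `x = t * y * u`. Then `y ≤J x ≤J y * u ≤J y` and likewise for `t * y`, so
`y J y * u` and `y J t * y`. Stability upgrades these to `y R y * u` and `y L t * y`, and since
`R` is a left congruence, `x = t * (y * u) R t * y L y`.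
-/

namespace leJ

variable {S : Type*} [Semigroup S] {x y z : S}

theorem refl (x : S) : leJ x x := Or.inl rfl

theorem mul_left (c : S) (h : leJ x y) : leJ (c * x) y := by
  rcases h with rfl | ⟨t, rfl⟩ | ⟨t, rfl⟩ | ⟨t, u, rfl⟩
  · exact Or.inr (Or.inr (Or.inl ⟨c, rfl⟩))
  · exact Or.inr (Or.inr (Or.inr ⟨c, t, (mul_assoc ..).symm⟩))
  · exact Or.inr (Or.inr (Or.inl ⟨c * t, (mul_assoc ..).symm⟩))
  · exact Or.inr (Or.inr (Or.inr ⟨c * t, u, by simp only [mul_assoc]⟩))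

theorem mul_right (c : S) (h : leJ x y) : leJ (x * c) y := by
  rcases h with rfl | ⟨t, rfl⟩ | ⟨t, rfl⟩ | ⟨t, u, rfl⟩
  · exact Or.inr (Or.inl ⟨c, rfl⟩)
  · exact Or.inr (Or.inl ⟨t * c, mul_assoc ..⟩)
  · exact Or.inr (Or.inr (Or.inr ⟨t, c, rfl⟩))
  · exact Or.inr (Or.inr (Or.inr ⟨t, u * c, by simp only [mul_assoc]⟩))

theorem trans (h₁ : leJ x y) (h₂ : leJ y z) : leJ x z := by
  rcases h₁ with rfl | ⟨t, rfl⟩ | ⟨t, rfl⟩ | ⟨t, u, rfl⟩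
  · exact h₂
  · exact h₂.mul_right t
  · exact h₂.mul_left t
  · exact (h₂.mul_left t).mul_right u

end leJ

section Green

variable {S : Type*} [Semigroup S] {x y : S}

theorem leR.mul_left (c : S) (h : leR x y) : leR (c * x) (c * y) := by
  rcases h with rfl | ⟨t, rfl⟩
  · exact Or.inl rfl
  · exact Or.inr ⟨t, (mul_assoc ..).symm⟩

theorem GreenR.refl (x : S) : GreenR x x := ⟨Or.inl rfl, Or.inl rfl⟩

theorem GreenR.symm (h : GreenR x y) : GreenR y x := ⟨h.2, h.1⟩

theorem GreenR.mul_left (c : S) (h : GreenR x y) : GreenR (c * x) (c * y) :=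
  ⟨h.1.mul_left c, h.2.mul_left c⟩

theorem GreenL.refl (x : S) : GreenL x x := ⟨Or.inl rfl, Or.inl rfl⟩

theorem GreenL.symm (h : GreenL x y) : GreenL y x := ⟨h.2, h.1⟩

theorem GreenR.greenD (h : GreenR x y) : GreenD x y := ⟨y, h, GreenL.refl y⟩

theorem GreenL.greenD (h : GreenL x y) : GreenD x y := ⟨x, GreenR.refl x, h⟩

end Green

/-- In any semigroup, a `J`-class containing a stable element `y` is a `D`-class:
every element `J`-related to `y` is `D`-related to `y`. -/
theorem stmt_8 {S : Type*} [Semigroup S] (y : S)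
    (hstab : ∀ a : S, (GreenJ y (y * a) → GreenR y (y * a)) ∧
      (GreenJ y (a * y) → GreenL y (a * y))) :
    ∀ x : S, GreenJ x y → GreenD x y := by
  intro x ⟨hxy, hyx⟩
  have hyu_le (u : S) : leJ (y * u) y := (leJ.refl y).mul_right u
  have hty_le (t : S) : leJ (t * y) y := (leJ.refl y).mul_left t
  rcases hxy with rfl | ⟨u, rfl⟩ | ⟨t, rfl⟩ | ⟨t, u, rfl⟩
  · exact (GreenR.refl x).greenD
  · exact ((hstab u).1 ⟨hyx, hyu_le u⟩).symm.greenD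
  · exact ((hstab t).2 ⟨hyx, hty_le t⟩).symm.greenD
  · have hR : GreenR y (y * u) :=
      (hstab u).1 ⟨hyx.trans (by rw [mul_assoc]; exact (leJ.refl _).mul_left t), hyu_le u⟩
    have hL : GreenL y (t * y) :=
      (hstab t).2 ⟨hyx.trans ((leJ.refl _).mul_right u), hty_le t⟩
    refine ⟨t * y, ?_, hL.symm⟩
    simpa only [mul_assoc] using hR.symm.mul_left t
end

section
/- If U is a regular subsemigroup of a right-stable semigroup S, then U is right-stable. -/
theorem leJ.map {S T : Type*} [Semigroup S] [Semigroup T] (f : S →ₙ* T) {a b : S}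
    (h : leJ a b) : leJ (f a) (f b) := by
  rcases h with rfl | ⟨t, rfl⟩ | ⟨t, rfl⟩ | ⟨t, u, rfl⟩
  · exact Or.inl rfl
  · exact Or.inr (Or.inl ⟨f t, map_mul f b t⟩)
  · exact Or.inr (Or.inr (Or.inl ⟨f t, map_mul f t b⟩))
  · exact Or.inr (Or.inr (Or.inr ⟨f t, f u, by rw [map_mul, map_mul]⟩))

theorem GreenJ.map {S T : Type*} [Semigroup S] [Semigroup T] (f : S →ₙ* T) {a b : S}
    (h : GreenJ a b) : GreenJ (f a) (f b) :=
  ⟨h.1.map f, h.2.map f⟩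

/-- If `x = a t` and `a = a z a`, then `x = a (z x)`, so the witness can be taken in `U`. -/
theorem Subsemigroup.leR_of_leR_coe {S : Type*} [Semigroup S] {U : Subsemigroup S} {x a : U}
    (ha : ∃ z : U, a = a * z * a) (h : leR (x : S) a) : leR x a := by
  obtain ⟨z, hz⟩ := ha
  rcases h with h | ⟨t, h⟩
  · exact Or.inl (Subtype.ext h)
  · refine Or.inr ⟨z * x, Subtype.ext ?_⟩
    have hzS : (a : S) = a * z * a := congrArg Subtype.val hz
    calc (x : S) = a * t := h
      _ = a * z * a * t := by rw [← hzS]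
      _ = a * (z * (a * t)) := by simp only [mul_assoc]
      _ = a * (z * x) := by rw [← h]

/-- If `U` is a regular subsemigroup of a right-stable semigroup `S`, then `U`
is right-stable. -/
theorem stmt_9 {S : Type*} [Semigroup S] (U : Subsemigroup S)
    (hreg : ∀ y : U, ∃ z : U, y = y * z * y)
    (hrs : ∀ x y : S, GreenJ x (x * y) → GreenR x (x * y)) :
    ∀ x y : U, GreenJ x (x * y) → GreenR x (x * y) := by
  intro x y hJ
  have hR : GreenR (x : S) (x * y) := hrs x y (hJ.map (MulMemClass.subtype U))
  exact ⟨Subsemigroup.leR_of_leR_coe (hreg (x * y)) hR.1, Or.inr ⟨y, rfl⟩⟩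
end

section
/- Let U be a right-simple semigroup that embeds in a left-stable semigroup S. Then U is left-cancellative. -/
/-! If `ab = ac` in `U`, right-simplicity writes `c = bt` and `b = (ab)w`. In `S` the second
equation makes `b` `J`-equivalent to `ab`, so left-stability gives `b = s(ab)` for some `s ∈ S¹`,
and then `c = bt = s(abt) = s(ac) = s(ab) = b`. -/

def IsLeftStable (S : Type*) [Semigroup S] : Prop :=
  ∀ x y : S, GreenJ x (y * x) → GreenL x (y * x)

section LeftStable

variable {S : Type*} [Semigroup S]

theorem leJ_of_eq_mul {x y w : S} (h : x = y * w) : leJ x y :=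
  Or.inr (Or.inl ⟨w, h⟩)

theorem leJ_mul_left (x y : S) : leJ (y * x) x :=
  Or.inr (Or.inr (Or.inl ⟨y, rfl⟩))

theorem IsLeftStable.leL_of_eq_mul {x y w : S} (hS : IsLeftStable S) (h : x = y * x * w) :
    leL x (y * x) :=
  (hS x y ⟨leJ_of_eq_mul h, leJ_mul_left x y⟩).1

theorem mul_eq_self_of_leL {x y t : S} (hx : leL x (y * x)) (h : y * x = y * (x * t)) :
    x * t = x := by
  rcases hx with hx | ⟨s, hx⟩
  · calc x * t = y * (x * t) := by rw [← mul_assoc, ← hx]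
      _ = x := by rw [← h, ← hx]
  · calc x * t = s * (y * (x * t)) := by rw [← mul_assoc y, ← mul_assoc, ← hx]
      _ = x := by rw [← h, ← hx]

theorem IsLeftStable.eq_of_mul_eq_mul {a b c t w : S} (hS : IsLeftStable S)
    (h : a * b = a * c) (hc : c = b * t) (hb : b = a * b * w) : b = c := by
  subst hc
  exact (mul_eq_self_of_leL (hS.leL_of_eq_mul hb) h).symm

end LeftStable

/-- If a right-simple semigroup `U` embeds in a left-stable semigroup `S`,
then `U` is left-cancellative. -/
theorem stmt_12 {U S : Type*} [Semigroup U] [Semigroup S]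
    (φ : U →ₙ* S) (hφ : Function.Injective φ)
    (hrs : ∀ x u : U, ∃ t : U, x * t = u)
    (hls : ∀ x y : S, GreenJ x (y * x) → GreenL x (y * x)) :
    ∀ a b c : U, a * b = a * c → b = c := by
  intro a b c h
  obtain ⟨t, rfl⟩ := hrs b c
  obtain ⟨w, hw⟩ := hrs (a * b) b
  apply hφ
  exact IsLeftStable.eq_of_mul_eq_mul hls (by rw [← map_mul, ← map_mul, h]) (map_mul φ b t)
    (by rw [← map_mul, ← map_mul, hw])
end
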